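/- arXiv:0705.3673 — 11 statements merged into one kernel-verified Lean document; each statement's English description precedes it below -/
import Mathlib

section
/- Let x, y, σ be real numbers with 0 < x < y, and suppose either 0 ≤ σ < 1 or σ ≥ 2. Then (y^σ − x^σ)/(y − x) ≤ (σ/2)(y^{σ−1} + x^{σ−1}). -/
/-!
Put `f t = σ t^(σ-1)`, the derivative of `t ↦ t^σ`. The claim is the trapezoidal bound
`∫ₓʸ f ≤ (y - x) (f x + f y) / 2`, which holds for every convex `f`; and `f` is convex on `(0, ∞)`
exactly when `σ ≥ 0` and `σ - 1 ∉ (0, 1)`, because `f'' t = σ (σ-1) (σ-2) t^(σ-3)`.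
-/

open Real Set

theorem convexOn_rpow_Ioi {p : ℝ} (hp : p ≤ 0 ∨ 1 ≤ p) :
    ConvexOn ℝ (Ioi 0) fun x : ℝ ↦ x ^ p := by
  have hderiv (q x : ℝ) (hx : x ∈ Ioi 0) :
      HasDerivWithinAt (fun x : ℝ ↦ x ^ q) (q * x ^ (q - 1)) (Ioi 0) x :=
    (hasDerivAt_rpow_const (Or.inl (ne_of_gt hx))).hasDerivWithinAt
  refine convexOn_of_hasDerivWithinAt2_nonneg (convex_Ioi 0)
    (fun x hx ↦ (hderiv p x hx).continuousWithinAt) (f' := fun x ↦ p * x ^ (p - 1))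
    (f'' := fun x ↦ p * ((p - 1) * x ^ (p - 1 - 1))) ?_ ?_ ?_ <;> simp only [interior_Ioi]
  · exact hderiv p
  · exact fun x hx ↦ (hderiv (p - 1) x hx).const_mul p
  · intro x hx
    have hpp : 0 ≤ p * (p - 1) := by rcases hp with hp | hp <;> nlinarith
    rw [← mul_assoc]
    exact mul_nonneg hpp (rpow_nonneg (le_of_lt hx) _)

theorem ConvexOn.sub_le_trapezoid_of_hasDerivAt {F f f' : ℝ → ℝ} {a b : ℝ}
    (hconv : ConvexOn ℝ (Icc a b) f) (hab : a ≤ b)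
    (hF : ∀ t ∈ Icc a b, HasDerivAt F (f t) t) (hf : ∀ t ∈ Icc a b, HasDerivAt f (f' t) t) :
    F b - F a ≤ (b - a) * ((f a + f b) / 2) := by
  set g : ℝ → ℝ := fun t ↦ (t - a) * ((f a + f t) / 2) - (F t - F a)
  have hg (t : ℝ) (ht : t ∈ Icc a b) :
      HasDerivAt g ((f a + f t) / 2 + (t - a) * (f' t / 2) - f t) t :=
    ((((hasDerivAt_id' t).sub_const a).fun_mul
      (((hf t ht).const_add (f a)).div_const 2)).fun_sub ((hF t ht).sub_const (F a))).congr_deriv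
        (by ring)
  have hmono : MonotoneOn g (Icc a b) := by
    refine monotoneOn_of_hasDerivWithinAt_nonneg (convex_Icc a b)
      (fun t ht ↦ (hg t ht).continuousAt.continuousWithinAt)
      (fun t ht ↦ (hg t (interior_subset ht)).hasDerivWithinAt) ?_
    rw [interior_Icc]
    intro t ht
    have hslope : slope f a t ≤ f' t := hconv.slope_le_of_hasDerivAt (left_mem_Icc.2 hab)
      (Ioo_subset_Icc_self ht) ht.1 (hf t (Ioo_subset_Icc_self ht))
    rw [slope_def_field, div_le_iff₀ (sub_pos.2 ht.1)] at hslope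
    linarith
  have hgab := hmono (left_mem_Icc.2 hab) (right_mem_Icc.2 hab) hab
  simp only [g, sub_self, zero_mul] at hgab
  linarith

/-- Outer cases of the elementary lemma: for `0 < x < y` and `0 ≤ σ < 1` or `σ ≥ 2`,
`(y^σ - x^σ)/(y - x) ≤ (σ/2) (y^(σ-1) + x^(σ-1))` (real powers). -/
theorem riesz_elem_lemma_outer (x y σ : ℝ) (hx : 0 < x) (hxy : x < y)
    (hσ : (0 ≤ σ ∧ σ < 1) ∨ 2 ≤ σ) :
    (y ^ σ - x ^ σ) / (y - x) ≤ (σ / 2) * (y ^ (σ - 1) + x ^ (σ - 1)) := by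
  obtain ⟨hσ₀, hp⟩ : 0 ≤ σ ∧ (σ - 1 ≤ 0 ∨ 1 ≤ σ - 1) := by
    rcases hσ with ⟨h₀, h₁⟩ | h₂
    · exact ⟨h₀, .inl (by linarith)⟩
    · exact ⟨by linarith, .inr (by linarith)⟩
  have hpos : Icc x y ⊆ Ioi 0 := fun t ht ↦ hx.trans_le ht.1
  have hconv : ConvexOn ℝ (Icc x y) fun t ↦ σ * t ^ (σ - 1) :=
    ((convexOn_rpow_Ioi hp).smul hσ₀).subset hpos (convex_Icc x y)
  have hderiv (q t : ℝ) (ht : t ∈ Icc x y) : HasDerivAt (fun t : ℝ ↦ t ^ q) (q * t ^ (q - 1)) t :=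
    hasDerivAt_rpow_const (Or.inl (ne_of_gt (hpos ht)))
  have htrap := hconv.sub_le_trapezoid_of_hasDerivAt hxy.le (hderiv σ)
    (fun t ht ↦ (hderiv (σ - 1) t ht).const_mul σ)
  rw [div_le_iff₀ (sub_pos.2 hxy)]
  linear_combination htrap
end

section
/- Let λ : ℕ → ℝ (indexed from 1) be nondecreasing with λ_k → ∞, let σ > 1, let c > 0 and a > 0 be real. Suppose that for all z ≥ a one has R_{σ−1}(z) ≥ (c/z) · R_σ(z). Then the function z ↦ R_σ(z)/z^{cσ} is nondecreasing on [a, ∞). -/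
open Real Filter

/-- Riesz mean of order `σ` of the sequence `λ_1, λ_2, …` (here `lam (k+1)` is `λ_{k+1}`):
`R_σ(z) := Σ_{k ≥ 1} (z - λ_k)_+ ^ σ`. -/
noncomputable def rieszMean (lam : ℕ → ℝ) (σ z : ℝ) : ℝ :=
  ∑' k : ℕ, (max (z - lam (k + 1)) 0) ^ σ

/-- The eigenvalue counting function `N(z) := #{k ≥ 1 : λ_k < z}`, as a real number. -/
noncomputable def countingFn (lam : ℕ → ℝ) (z : ℝ) : ℝ :=
  Nat.card {k : ℕ // 1 ≤ k ∧ lam k < z}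

/-- The average `λ̄_j := (1/j) Σ_{ℓ=1}^j λ_ℓ` of the first `j` terms. -/
noncomputable def eigAvg (lam : ℕ → ℝ) (j : ℕ) : ℝ :=
  (∑ ℓ ∈ Finset.Icc 1 j, lam ℓ) / j

/-!
Since `σ > 1`, each term `(z - λ_k)_+ ^ σ` is differentiable with derivative
`σ (z - λ_k)_+ ^ (σ - 1)`, and since `λ_k → ∞`, near any `z` only finitely many terms are nonzero,
so `R_σ' = σ R_{σ-1}`. The hypothesis then reads `R_σ' ≥ (cσ / z) R_σ`, which is exactly the
statement that the derivative of `R_σ(z) / z^{cσ}` is nonnegative.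
-/

open Set

theorem hasDerivAt_max_zero_rpow {p : ℝ} (hp : 1 < p) (z : ℝ) :
    HasDerivAt (fun x : ℝ => max x 0 ^ p) (p * max z 0 ^ (p - 1)) z := by
  rcases lt_trichotomy z 0 with hz | rfl | hz
  · rw [max_eq_right hz.le, zero_rpow (by linarith), mul_zero]
    refine (hasDerivAt_const z ((0 : ℝ) ^ p)).congr_of_eventuallyEq ?_
    filter_upwards [eventually_lt_nhds hz] with x hx
    rw [max_eq_right hx.le]
  · -- At the kink, glue the one-sided derivatives of `0` and of `x ^ p`; both vanish as `p > 1`.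
    rw [max_self, zero_rpow (by linarith), mul_zero, ← hasDerivWithinAt_univ, ← Iic_union_Ici]
    refine HasDerivWithinAt.union ?_ ?_
    · exact (hasDerivWithinAt_const 0 _ ((0 : ℝ) ^ p)).congr (fun x hx => by rw [max_eq_right hx])
        (by rw [max_self])
    · have := (hasDerivAt_rpow_const (p := p) (x := 0) (Or.inr hp.le)).hasDerivWithinAt (s := Ici 0)
      rw [zero_rpow (by linarith), mul_zero] at this
      exact this.congr (fun x hx => by rw [max_eq_left hx]) (by rw [max_self])
  · have := hasDerivAt_rpow_const (p := p) (Or.inl hz.ne')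
    rw [max_eq_left hz.le]
    refine this.congr_of_eventuallyEq ?_
    filter_upwards [eventually_gt_nhds hz] with x hx
    rw [max_eq_left hx.le]

theorem monotoneOn_div_rpow_of_le_deriv {f f' : ℝ → ℝ} {k a : ℝ} (ha : 0 < a)
    (hf : ∀ z ∈ Ici a, HasDerivAt f (f' z) z) (hle : ∀ z ∈ Ici a, k / z * f z ≤ f' z) :
    MonotoneOn (fun z => f z / z ^ k) (Ici a) := by
  have hquot : ∀ z ∈ Ici a, HasDerivAt (fun z => f z / z ^ k)
      ((f' z * z ^ k - f z * (k * z ^ (k - 1))) / (z ^ k) ^ 2) z := fun z hz =>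
    (hf z hz).div (hasDerivAt_rpow_const (Or.inl (ha.trans_le hz).ne'))
      (rpow_pos_of_pos (ha.trans_le hz) k).ne'
  refine monotoneOn_of_hasDerivWithinAt_nonneg (convex_Ici a)
    (fun z hz => (hquot z hz).continuousAt.continuousWithinAt)
    (fun z hz => (hquot z (interior_subset hz)).hasDerivWithinAt) fun z hz => ?_
  rw [interior_Ici] at hz
  have hz0 : 0 < z := ha.trans hz
  have hnum : f' z * z ^ k - f z * (k * z ^ (k - 1)) = z ^ k * (f' z - k / z * f z) := by
    rw [rpow_sub_one hz0.ne']
    ring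
  rw [hnum]
  have := hle z (mem_Ici.mpr hz.le)
  have := rpow_pos_of_pos hz0 k
  positivity

theorem rieszMean_eq_sum_range {lam : ℕ → ℝ} {p x : ℝ} (hp : p ≠ 0) {N : ℕ}
    (hN : ∀ k, N ≤ k → x ≤ lam k) :
    rieszMean lam p x = ∑ k ∈ Finset.range N, max (x - lam (k + 1)) 0 ^ p := by
  refine tsum_eq_sum fun k hk => ?_
  have hxk : x ≤ lam (k + 1) := hN (k + 1) (by simp at hk; omega)
  rw [max_eq_right (by linarith), zero_rpow hp]

theorem hasDerivAt_rieszMean {lam : ℕ → ℝ} (hlam : Tendsto lam atTop atTop) {σ : ℝ} (hσ : 1 < σ)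
    (z : ℝ) : HasDerivAt (rieszMean lam σ) (σ * rieszMean lam (σ - 1) z) z := by
  obtain ⟨N, hN⟩ := eventually_atTop.mp (hlam.eventually_ge_atTop (z + 1))
  have hsum : HasDerivAt (fun x => ∑ k ∈ Finset.range N, max (x - lam (k + 1)) 0 ^ σ)
      (∑ k ∈ Finset.range N, σ * max (z - lam (k + 1)) 0 ^ (σ - 1)) z :=
    HasDerivAt.fun_sum fun k _ => (hasDerivAt_max_zero_rpow hσ _).comp_sub_const z (lam (k + 1))
  rw [rieszMean_eq_sum_range (by linarith) fun k hk => (lt_add_one z).le.trans (hN k hk),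
    Finset.mul_sum]
  refine hsum.congr_of_eventuallyEq ?_
  filter_upwards [eventually_lt_nhds (lt_add_one z)] with x hx
  exact rieszMean_eq_sum_range (by linarith) fun k hk => hx.le.trans (hN k hk)

theorem rieszMean_div_pow_monotone_general (lam : ℕ → ℝ)
    (htend : Tendsto lam atTop atTop)
    (σ : ℝ) (hσ : 1 < σ) (c : ℝ) (a : ℝ) (ha : 0 < a)
    (hdiff : ∀ z : ℝ, a ≤ z → rieszMean lam (σ - 1) z ≥ (c / z) * rieszMean lam σ z) :
    MonotoneOn (fun z => rieszMean lam σ z / z ^ (c * σ)) (Set.Ici a) := by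
  refine monotoneOn_div_rpow_of_le_deriv ha (fun z _ => hasDerivAt_rieszMean htend hσ z)
    fun z hz => ?_
  calc c * σ / z * rieszMean lam σ z = σ * (c / z * rieszMean lam σ z) := by ring
    _ ≤ σ * rieszMean lam (σ - 1) z := by gcongr; exact hdiff z hz

/-- If the difference inequality `R_{σ-1}(z) ≥ (c/z) R_σ(z)` holds for all `z ≥ a`,
then `z ↦ R_σ(z) / z^(cσ)` is nondecreasing on `[a, ∞)`. -/
theorem rieszMean_div_pow_monotone (lam : ℕ → ℝ)
    (hmono : ∀ k : ℕ, 1 ≤ k → lam k ≤ lam (k + 1))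
    (htend : Tendsto lam atTop atTop)
    (σ : ℝ) (hσ : 1 < σ) (c : ℝ) (hc : 0 < c) (a : ℝ) (ha : 0 < a)
    (hdiff : ∀ z : ℝ, a ≤ z → rieszMean lam (σ - 1) z ≥ (c / z) * rieszMean lam σ z) :
    MonotoneOn (fun z => rieszMean lam σ z / z ^ (c * σ)) (Set.Ici a) :=
  rieszMean_div_pow_monotone_general lam htend σ hσ c a ha hdiff
end

section
/- Let d be a positive integer, let σ ≥ 2 be real, and let λ : ℕ → ℝ (indexed from 1) be nondecreasing with λ_1 > 0 and λ_k → ∞. Suppose the function z ↦ R_σ(z)/z^{σ + d/2} is nondecreasing on [λ_1, ∞). Then for every z ≥ (1 + 2σ/d)·λ_1, R_σ(z) ≥ (2σ/d)^σ · λ_1^{−d/2} · (z/(1 + 2σ/d))^{σ + d/2}. -/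
open Real Filter

/-!
At `z₀ = (1 + 2σ/d) λ_1` the first term alone gives `R_σ(z₀) ≥ (z₀ - λ_1)^σ = (2σ/d · λ_1)^σ`.
Monotonicity of `R_σ(z) / z^(σ + d/2)` transports this to every `z ≥ z₀`:
`R_σ(z) ≥ R_σ(z₀) (z / z₀)^(σ + d/2)`, which is the claimed bound after regrouping the powers
of `λ_1`.
-/

section RieszMean

variable {lam : ℕ → ℝ} {σ : ℝ}

theorem summable_rieszMean_terms (htend : Tendsto lam atTop atTop) (hσ : σ ≠ 0) (z : ℝ) :
    Summable fun k : ℕ => (max (z - lam (k + 1)) 0) ^ σ := by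
  obtain ⟨N, hN⟩ := (htend.eventually_ge_atTop z).exists_forall_of_atTop
  refine summable_of_ne_finset_zero (s := Finset.range N) fun k hk => ?_
  have hle : z - lam (k + 1) ≤ 0 := by
    have := hN (k + 1) (by simp only [Finset.mem_range, not_lt] at hk; omega)
    linarith
  rw [max_eq_right hle, zero_rpow hσ]

theorem rpow_sub_first_le_rieszMean (htend : Tendsto lam atTop atTop) (hσ : σ ≠ 0) (z : ℝ) :
    (max (z - lam 1) 0) ^ σ ≤ rieszMean lam σ z :=
  (summable_rieszMean_terms htend hσ z).le_tsum 0 fun _ _ => rpow_nonneg (le_max_right _ _) σ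

end RieszMean

theorem mul_div_rpow_le_of_monotoneOn_div_rpow {f : ℝ → ℝ} {s : Set ℝ} {p z₀ z : ℝ}
    (hf : MonotoneOn (fun x => f x / x ^ p) s) (hz₀s : z₀ ∈ s) (hzs : z ∈ s)
    (hz₀ : 0 < z₀) (hz : z₀ ≤ z) :
    f z₀ * (z / z₀) ^ p ≤ f z := by
  have hzpos : 0 < z := hz₀.trans_le hz
  have hratio : f z₀ / z₀ ^ p ≤ f z / z ^ p := hf hz₀s hzs hz
  rw [div_le_div_iff₀ (rpow_pos_of_pos hz₀ p) (rpow_pos_of_pos hzpos p)] at hratio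
  rw [div_rpow hzpos.le hz₀.le, mul_div_assoc', div_le_iff₀ (rpow_pos_of_pos hz₀ p)]
  linarith

theorem rpow_mul_rpow_neg_mul_div_rpow {a b l z σ t : ℝ} (ha : 0 ≤ a) (hb : 0 ≤ b) (hl : 0 < l)
    (hz : 0 ≤ z) :
    a ^ σ * l ^ (-t) * (z / b) ^ (σ + t) = (a * l) ^ σ * (z / (b * l)) ^ (σ + t) := by
  have hlt : l ^ (-t) = l ^ σ / l ^ (σ + t) := by
    rw [← rpow_sub hl]; ring_nf
  rw [mul_rpow ha hl.le, ← div_div, div_rpow (div_nonneg hz hb) hl.le, hlt]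
  field_simp

theorem rieszMean_lower_bound_of_monotone_general (d : ℕ) (hd : 0 < d)
    (σ : ℝ) (hσ : 2 ≤ σ) (lam : ℕ → ℝ)
    (hpos : 0 < lam 1)
    (htend : Tendsto lam atTop atTop)
    (hmonoR : MonotoneOn (fun z => rieszMean lam σ z / z ^ (σ + (d : ℝ) / 2))
      (Set.Ici (lam 1))) :
    ∀ z : ℝ, (1 + 2 * σ / (d : ℝ)) * lam 1 ≤ z →
      rieszMean lam σ z ≥
        (2 * σ / (d : ℝ)) ^ σ * lam 1 ^ (-(d : ℝ) / 2) *
          (z / (1 + 2 * σ / (d : ℝ))) ^ (σ + (d : ℝ) / 2) := by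
  intro z hz
  set c := 2 * σ / (d : ℝ)
  have hc : 0 < c := by positivity
  have hz₀ : lam 1 ≤ (1 + c) * lam 1 := by nlinarith
  have hzpos : 0 < z := by nlinarith
  have hfirst : (c * lam 1) ^ σ ≤ rieszMean lam σ ((1 + c) * lam 1) := by
    have h := rpow_sub_first_le_rieszMean htend (by linarith : (0 : ℝ) < σ).ne'
      ((1 + c) * lam 1)
    rwa [show (1 + c) * lam 1 - lam 1 = c * lam 1 by ring, max_eq_left (by positivity)] at h
  have hgrowth := mul_div_rpow_le_of_monotoneOn_div_rpow hmonoR (Set.mem_Ici.2 hz₀)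
    (Set.mem_Ici.2 (hz₀.trans hz)) (by positivity) hz
  rw [ge_iff_le, neg_div, rpow_mul_rpow_neg_mul_div_rpow hc.le (by linarith) hpos hzpos.le]
  have hratio : 0 ≤ (z / ((1 + c) * lam 1)) ^ (σ + (d : ℝ) / 2) :=
    rpow_nonneg (div_nonneg hzpos.le (by positivity)) _
  exact (mul_le_mul_of_nonneg_right hfirst hratio).trans hgrowth

/-- Lower bound of Corollary 2: if `z ↦ R_σ(z)/z^(σ+d/2)` is nondecreasing on `[λ_1, ∞)`,
then for `z ≥ (1 + 2σ/d) λ_1`,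
`R_σ(z) ≥ (2σ/d)^σ λ_1^(-d/2) (z/(1 + 2σ/d))^(σ+d/2)`. -/
theorem rieszMean_lower_bound_of_monotone (d : ℕ) (hd : 0 < d)
    (σ : ℝ) (hσ : 2 ≤ σ) (lam : ℕ → ℝ)
    (hmono : ∀ k : ℕ, 1 ≤ k → lam k ≤ lam (k + 1))
    (hpos : 0 < lam 1)
    (htend : Tendsto lam atTop atTop)
    (hmonoR : MonotoneOn (fun z => rieszMean lam σ z / z ^ (σ + (d : ℝ) / 2))
      (Set.Ici (lam 1))) :
    ∀ z : ℝ, (1 + 2 * σ / (d : ℝ)) * lam 1 ≤ z →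
      rieszMean lam σ z ≥
        (2 * σ / (d : ℝ)) ^ σ * lam 1 ^ (-(d : ℝ) / 2) *
          (z / (1 + 2 * σ / (d : ℝ))) ^ (σ + (d : ℝ) / 2) :=
  rieszMean_lower_bound_of_monotone_general d hd σ hσ lam hpos htend hmonoR
end

section
/- Let d be a positive integer, let σ be real with 1 ≤ σ < 2, and let λ : ℕ → ℝ (indexed from 1) be nondecreasing with λ_1 > 0 and λ_k → ∞. Suppose that (i) for all z ≥ λ_1, R_σ(z) ≥ (1 + d/(2(σ+1))) · R_{σ+1}(z)/z, and (ii) z ↦ R_{σ+1}(z)/z^{σ + 1 + d/2} is nondecreasing on [λ_1, ∞). Then for every z ≥ (1 + (2σ+2)/d)·λ_1, R_σ(z) ≥ (2σ+2)^σ · d^{d/2} · (d + 2σ + 2)^{−(σ + d/2)} · λ_1^{−d/2} · z^{σ + d/2}. -/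
open Real Filter

/-! Only the first term of `R_{σ+1}` is used: `R_{σ+1}(z₀) ≥ (z₀ - λ₁)^(σ+1)`. Monotonicity (ii)
carries this to `R_{σ+1}(z) ≥ R_{σ+1}(z₀) (z/z₀)^(σ+1+d/2)` for `z ≥ z₀`, and (i) turns it into a
lower bound for `R_σ(z)`. The threshold `z₀ = (1 + (2σ+2)/d) λ₁` maximises
`(z₀ - λ₁)^(σ+1) / z₀^(σ+1+d/2)`. -/

namespace rieszMean

variable {lam : ℕ → ℝ} {σ z : ℝ}

theorem summable_terms (htend : Tendsto lam atTop atTop) (hσ : σ ≠ 0) :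
    Summable fun k : ℕ => max (z - lam (k + 1)) 0 ^ σ := by
  obtain ⟨N, hN⟩ := eventually_atTop.1 (htend.eventually_ge_atTop z)
  refine summable_of_ne_finset_zero (s := Finset.range N) fun k hk => ?_
  have hzk : z - lam (k + 1) ≤ 0 := sub_nonpos.2 (hN _ (by simp at hk; omega))
  rw [max_eq_right hzk, zero_rpow hσ]

theorem rpow_sub_lam_one_le (htend : Tendsto lam atTop atTop) (hσ : σ ≠ 0) (hz : lam 1 ≤ z) :
    (z - lam 1) ^ σ ≤ rieszMean lam σ z := by
  have h := (summable_terms (z := z) htend hσ).le_tsum 0 fun k _ =>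
    rpow_nonneg (le_max_right _ _) σ
  rwa [zero_add, max_eq_left (sub_nonneg.2 hz)] at h

end rieszMean

theorem mul_rpow_le_of_monotoneOn_div_rpow {f : ℝ → ℝ} {p a x y : ℝ}
    (hf : MonotoneOn (fun z => f z / z ^ p) (Set.Ici a)) (hax : a ≤ x) (hxy : x ≤ y)
    (hy : 0 < y) : f x / x ^ p * y ^ p ≤ f y :=
  (le_div_iff₀ (rpow_pos_of_pos hy p)).1 (hf hax (hax.trans hxy) hxy)

/-- The constant of (2.16), read off at `z₀ = (1 + (2σ+2)/d) λ₁`, where `z₀ - λ₁ = (2σ+2) λ₁ / d`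
and `z₀ = (d+2σ+2) λ₁ / d`. -/
theorem rieszBound_constant_eq {d σ L z : ℝ} (hd : 0 < d) (hσ : -1 < σ) (hL : 0 < L)
    (hz : 0 < z) :
    (1 + d / (2 * (σ + 1))) *
        (((1 + (2 * σ + 2) / d) * L - L) ^ (σ + 1) /
          ((1 + (2 * σ + 2) / d) * L) ^ (σ + 1 + d / 2) * z ^ (σ + 1 + d / 2)) / z =
      (2 * σ + 2) ^ σ * d ^ (d / 2) * (d + 2 * σ + 2) ^ (-(σ + d / 2)) * L ^ (-d / 2) *
        z ^ (σ + d / 2) := by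
  have ha : 0 < 2 * σ + 2 := by linarith
  have hc : 0 < d + 2 * σ + 2 := by linarith
  have hs : σ + 1 ≠ 0 := by linarith
  have hgap : (1 + (2 * σ + 2) / d) * L - L = (2 * σ + 2) * L / d := by field_simp; ring
  have hz₀ : (1 + (2 * σ + 2) / d) * L = (d + 2 * σ + 2) * L / d := by field_simp; ring
  have hC : 1 + d / (2 * (σ + 1)) = (d + 2 * σ + 2) / (2 * σ + 2) := by
    field_simp; ring
  rw [hgap, hz₀, hC, div_rpow (by positivity) hd.le, div_rpow (by positivity) hd.le,
    mul_rpow ha.le hL.le, mul_rpow hc.le hL.le, rpow_add hd (σ + 1) (d / 2),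
    rpow_add hL (σ + 1) (d / 2), add_right_comm σ 1 (d / 2), rpow_add_one hc.ne',
    rpow_add_one hz.ne', rpow_add_one ha.ne' σ, rpow_neg hc.le, neg_div, rpow_neg hL.le]
  have hM : L ^ (σ + 1) ≠ 0 := (rpow_pos_of_pos hL _).ne'
  have hD : d ^ (σ + 1) ≠ 0 := (rpow_pos_of_pos hd _).ne'
  -- otherwise `field_simp` splits `x ^ (σ + 1)` into `x ^ σ * x ^ 1` and cannot cancel it
  generalize L ^ (σ + 1) = M, d ^ (σ + 1) = D at hM hD ⊢
  field_simp

theorem rieszMean_lower_bound_sigma_lt_two_general (d : ℕ) (hd : 0 < d)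
    (σ : ℝ) (hσ1 : 1 ≤ σ) (lam : ℕ → ℝ)
    (hpos : 0 < lam 1)
    (htend : Tendsto lam atTop atTop)
    (hdiff : ∀ z : ℝ, lam 1 ≤ z →
      rieszMean lam σ z ≥ (1 + (d : ℝ) / (2 * (σ + 1))) * rieszMean lam (σ + 1) z / z)
    (hmonoR : MonotoneOn (fun z => rieszMean lam (σ + 1) z / z ^ (σ + 1 + (d : ℝ) / 2))
      (Set.Ici (lam 1))) :
    ∀ z : ℝ, (1 + (2 * σ + 2) / (d : ℝ)) * lam 1 ≤ z →
      rieszMean lam σ z ≥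
        (2 * σ + 2) ^ σ * (d : ℝ) ^ ((d : ℝ) / 2) *
          ((d : ℝ) + 2 * σ + 2) ^ (-(σ + (d : ℝ) / 2)) *
          lam 1 ^ (-(d : ℝ) / 2) * z ^ (σ + (d : ℝ) / 2) := by
  intro z hz
  set z₀ := (1 + (2 * σ + 2) / (d : ℝ)) * lam 1
  set p := σ + 1 + (d : ℝ) / 2
  have hd' : (0 : ℝ) < d := Nat.cast_pos.2 hd
  have hLz₀ : lam 1 ≤ z₀ := le_mul_of_one_le_left hpos.le
    (le_add_of_nonneg_right (div_nonneg (by linarith) hd'.le))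
  have hzpos : 0 < z := hpos.trans_le (hLz₀.trans hz)
  have hfirst : (z₀ - lam 1) ^ (σ + 1) ≤ rieszMean lam (σ + 1) z₀ :=
    rieszMean.rpow_sub_lam_one_le htend (by linarith) hLz₀
  have hgrowth : rieszMean lam (σ + 1) z₀ / z₀ ^ p * z ^ p ≤ rieszMean lam (σ + 1) z :=
    mul_rpow_le_of_monotoneOn_div_rpow hmonoR hLz₀ hz hzpos
  have hz₀pos : 0 < z₀ := hpos.trans_le hLz₀
  calc _ = (1 + (d : ℝ) / (2 * (σ + 1))) * ((z₀ - lam 1) ^ (σ + 1) / z₀ ^ p * z ^ p) / z :=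
        (rieszBound_constant_eq hd' (by linarith) hpos hzpos).symm
    _ ≤ (1 + (d : ℝ) / (2 * (σ + 1))) * rieszMean lam (σ + 1) z / z := by
        gcongr
        refine le_trans ?_ hgrowth
        gcongr
    _ ≤ rieszMean lam σ z := hdiff z (hLz₀.trans hz)

/-- Inequality (2.16) of Corollary 5: for `1 ≤ σ < 2`, given the difference inequality
relating `R_σ` to `R_{σ+1}` and monotonicity of `R_{σ+1}(z)/z^(σ+1+d/2)`, one has, for
`z ≥ (1 + (2σ+2)/d) λ_1`,
`R_σ(z) ≥ (2σ+2)^σ d^(d/2) (d+2σ+2)^(-(σ+d/2)) λ_1^(-d/2) z^(σ+d/2)`. -/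
theorem rieszMean_lower_bound_sigma_lt_two (d : ℕ) (hd : 0 < d)
    (σ : ℝ) (hσ1 : 1 ≤ σ) (hσ2 : σ < 2) (lam : ℕ → ℝ)
    (hmono : ∀ k : ℕ, 1 ≤ k → lam k ≤ lam (k + 1))
    (hpos : 0 < lam 1)
    (htend : Tendsto lam atTop atTop)
    (hdiff : ∀ z : ℝ, lam 1 ≤ z →
      rieszMean lam σ z ≥ (1 + (d : ℝ) / (2 * (σ + 1))) * rieszMean lam (σ + 1) z / z)
    (hmonoR : MonotoneOn (fun z => rieszMean lam (σ + 1) z / z ^ (σ + 1 + (d : ℝ) / 2))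
      (Set.Ici (lam 1))) :
    ∀ z : ℝ, (1 + (2 * σ + 2) / (d : ℝ)) * lam 1 ≤ z →
      rieszMean lam σ z ≥
        (2 * σ + 2) ^ σ * (d : ℝ) ^ ((d : ℝ) / 2) *
          ((d : ℝ) + 2 * σ + 2) ^ (-(σ + (d : ℝ) / 2)) *
          lam 1 ^ (-(d : ℝ) / 2) * z ^ (σ + (d : ℝ) / 2) :=
  rieszMean_lower_bound_sigma_lt_two_general d hd σ hσ1 lam hpos htend hdiff hmonoR
end

section
/- Let d be a positive integer and let λ : ℕ → ℝ (indexed from 1) be nondecreasing with λ_1 > 0 and λ_k → ∞. Suppose that (i) for all z ≥ λ_1, N(z) ≥ (1 + d/4) · R_1(z)/z, (ii) for all z ≥ λ_1, R_1(z) ≥ (1 + d/4) · R_2(z)/z, and (iii) z ↦ R_2(z)/z^{2 + d/2} is nondecreasing on [λ_1, ∞). Then for every z ≥ (1 + 4/d)·λ_1, N(z) ≥ ( z / ((1 + 4/d)·λ_1) )^{d/2}. -/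
open Real Filter

/-! Chaining (i) and (ii) gives `N(z) ≥ c² R₂(z) / z²` with `c = 1 + d/4`, and (iii) gives
`R₂(z) ≥ R₂(μ) (z/μ)^(2 + d/2)` for `z ≥ μ := (1 + 4/d) λ₁`. Keeping only the first term,
`R₂(μ) ≥ (μ - λ₁)² = (μ/c)²`, and the powers of `c` and `μ` cancel to leave `(z/μ)^(d/2)`. -/

section RieszMean

variable {lam : ℕ → ℝ} {σ : ℝ}

theorem rpow_sub_le_rieszMean (htend : Tendsto lam atTop atTop) (hσ : σ ≠ 0) {z : ℝ} (k : ℕ)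
    (hk : lam (k + 1) ≤ z) : (z - lam (k + 1)) ^ σ ≤ rieszMean lam σ z := by
  have hterm := (summable_rieszMean_terms htend hσ z).le_tsum k
    fun _ _ => rpow_nonneg (le_max_right _ _) σ
  rwa [max_eq_left (sub_nonneg.mpr hk)] at hterm

end RieszMean

theorem mul_div_rpow_le_of_monotoneOn {f : ℝ → ℝ} {a e μ z : ℝ}
    (hf : MonotoneOn (fun x => f x / x ^ e) (Set.Ici a)) (haμ : a ≤ μ) (hμ : 0 < μ)
    (hμz : μ ≤ z) : f μ * (z / μ) ^ e ≤ f z := by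
  have hz : 0 < z := hμ.trans_le hμz
  have h := hf (Set.mem_Ici.mpr haμ) (Set.mem_Ici.mpr (haμ.trans hμz)) hμz
  rw [div_le_div_iff₀ (rpow_pos_of_pos hμ e) (rpow_pos_of_pos hz e)] at h
  rw [div_rpow hz.le hμ.le, ← mul_div_assoc, div_le_iff₀ (rpow_pos_of_pos hμ e)]
  exact h

theorem counting_lower_bound_general (d : ℕ) (hd : 0 < d) (lam : ℕ → ℝ)
    (hpos : 0 < lam 1)
    (htend : Tendsto lam atTop atTop)
    (hdiff0 : ∀ z : ℝ, lam 1 ≤ z →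
      countingFn lam z ≥ (1 + (d : ℝ) / 4) * rieszMean lam 1 z / z)
    (hdiff1 : ∀ z : ℝ, lam 1 ≤ z →
      rieszMean lam 1 z ≥ (1 + (d : ℝ) / 4) * rieszMean lam 2 z / z)
    (hmonoR : MonotoneOn (fun z => rieszMean lam 2 z / z ^ (2 + (d : ℝ) / 2))
      (Set.Ici (lam 1))) :
    ∀ z : ℝ, (1 + 4 / (d : ℝ)) * lam 1 ≤ z →
      countingFn lam z ≥ (z / ((1 + 4 / (d : ℝ)) * lam 1)) ^ ((d : ℝ) / 2) := by
  intro z hz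
  have hd' : (0 : ℝ) < d := by exact_mod_cast hd
  set c : ℝ := 1 + (d : ℝ) / 4
  set μ : ℝ := (1 + 4 / (d : ℝ)) * lam 1
  have hc : 0 < c := by positivity
  have hμ : 0 < μ := by positivity
  have hμc : μ - lam 1 = μ / c := by simp only [μ, c]; field_simp; ring
  have hlam : lam 1 ≤ μ := by nlinarith [div_pos four_pos hd']
  have hz0 : 0 < z := hμ.trans_le hz
  have hRμ : (μ / c) ^ 2 ≤ rieszMean lam 2 μ := by
    simpa only [hμc, rpow_two] using rpow_sub_le_rieszMean htend two_ne_zero 0 hlam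
  have hRz := mul_div_rpow_le_of_monotoneOn hmonoR hlam hμ hz
  have hN : c ^ 2 * rieszMean lam 2 z / z ^ 2 ≤ countingFn lam z :=
    calc c ^ 2 * rieszMean lam 2 z / z ^ 2 = c * (c * rieszMean lam 2 z / z) / z := by ring
      _ ≤ c * rieszMean lam 1 z / z := by gcongr; exact hdiff1 z (hlam.trans hz)
      _ ≤ countingFn lam z := hdiff0 z (hlam.trans hz)
  calc (z / μ) ^ ((d : ℝ) / 2)
      = c ^ 2 * ((μ / c) ^ 2 * (z / μ) ^ (2 + (d : ℝ) / 2)) / z ^ 2 := by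
        rw [rpow_add (div_pos hz0 hμ), rpow_two]; field_simp
    _ ≤ c ^ 2 * (rieszMean lam 2 μ * (z / μ) ^ (2 + (d : ℝ) / 2)) / z ^ 2 := by gcongr
    _ ≤ c ^ 2 * rieszMean lam 2 z / z ^ 2 := by gcongr
    _ ≤ countingFn lam z := hN

/-- Inequality (2.19): given the difference inequalities (i), (ii) and monotonicity of
`R_2(z)/z^(2+d/2)`, one has `N(z) ≥ (z / ((1 + 4/d) λ_1))^(d/2)` for
`z ≥ (1 + 4/d) λ_1`. -/
theorem counting_lower_bound (d : ℕ) (hd : 0 < d) (lam : ℕ → ℝ)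
    (hmono : ∀ k : ℕ, 1 ≤ k → lam k ≤ lam (k + 1))
    (hpos : 0 < lam 1)
    (htend : Tendsto lam atTop atTop)
    (hdiff0 : ∀ z : ℝ, lam 1 ≤ z →
      countingFn lam z ≥ (1 + (d : ℝ) / 4) * rieszMean lam 1 z / z)
    (hdiff1 : ∀ z : ℝ, lam 1 ≤ z →
      rieszMean lam 1 z ≥ (1 + (d : ℝ) / 4) * rieszMean lam 2 z / z)
    (hmonoR : MonotoneOn (fun z => rieszMean lam 2 z / z ^ (2 + (d : ℝ) / 2))
      (Set.Ici (lam 1))) :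
    ∀ z : ℝ, (1 + 4 / (d : ℝ)) * lam 1 ≤ z →
      countingFn lam z ≥ (z / ((1 + 4 / (d : ℝ)) * lam 1)) ^ ((d : ℝ) / 2) :=
  counting_lower_bound_general d hd lam hpos htend hdiff0 hdiff1 hmonoR
end

section
/- Let d be a positive integer, let j ≥ 1 be an integer, and let λ : ℕ → ℝ (indexed from 1) be nondecreasing with λ_1 > 0 and λ_k → ∞. Suppose that (i) z ↦ R_2(z)/z^{2 + d/2} is nondecreasing on [λ_1, ∞), (ii) λ_j ≤ (1 + 4/d)·λ̄_j, and (iii) for all z ≥ λ_1, R_1(z) ≥ (1 + d/4) · R_2(z)/z. Then for every z ≥ (1 + 4/d)·λ̄_j, R_1(z) ≥ j · z^{1 + d/2} / ( (1 + d/4) · ((1 + 4/d)·λ̄_j)^{d/2} ). -/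
open Real Filter

/-! Write `λ̄ = λ̄_j` and `w = (1 + 4/d) λ̄`, so that `w - λ̄ = w / (1 + d/4)`. Cauchy–Schwarz on
the first `j` terms of `R_2(w)`, applied to positive parts, gives `R_2(w) ≥ j (w - λ̄)²`.
Hypothesis (i) transports this to `R_2(z) ≥ R_2(w) (z/w)^(2 + d/2)` for `z ≥ w`, and (iii)
turns it into the lower bound for `R_1(z)`; the powers of `1 + d/4` and of `w` combine to the
stated constant. -/

lemma sq_sum_le_card_mul_sum_sq_max_zero {ι : Type*} (s : Finset ι) (g : ι → ℝ)
    (hg : 0 ≤ ∑ i ∈ s, g i) :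
    (∑ i ∈ s, g i) ^ 2 ≤ s.card * ∑ i ∈ s, max (g i) 0 ^ 2 := calc
  (∑ i ∈ s, g i) ^ 2 ≤ (∑ i ∈ s, max (g i) 0) ^ 2 :=
    pow_le_pow_left₀ hg (Finset.sum_le_sum fun _ _ => le_max_left _ _) 2
  _ ≤ s.card * ∑ i ∈ s, max (g i) 0 ^ 2 := sq_sum_le_card_mul_sum_sq

lemma natCast_mul_eigAvg (lam : ℕ → ℝ) (j : ℕ) :
    (j : ℝ) * eigAvg lam j = ∑ ℓ ∈ Finset.Icc 1 j, lam ℓ := by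
  rcases Nat.eq_zero_or_pos j with rfl | hj
  · simp [eigAvg]
  · rw [eigAvg, mul_div_cancel₀ _ (by positivity)]

lemma lam_one_le_eigAvg {lam : ℕ → ℝ} (hmono : ∀ k : ℕ, 1 ≤ k → lam k ≤ lam (k + 1))
    {j : ℕ} (hj : 1 ≤ j) : lam 1 ≤ eigAvg lam j := by
  have hmonoOn := monotoneOn_nat_Ici_of_le_succ hmono
  have hsum : (j : ℝ) * lam 1 ≤ j * eigAvg lam j := by
    rw [natCast_mul_eigAvg]
    simpa using Finset.sum_le_sum fun ℓ hℓ =>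
      hmonoOn (Set.mem_Ici.2 le_rfl) (Set.mem_Ici.2 (Finset.mem_Icc.1 hℓ).1)
        (Finset.mem_Icc.1 hℓ).1
  exact le_of_mul_le_mul_left hsum (by exact_mod_cast hj)

lemma summable_rieszMean_term {lam : ℕ → ℝ} (htend : Tendsto lam atTop atTop) {σ : ℝ}
    (hσ : σ ≠ 0) (z : ℝ) : Summable fun k : ℕ => max (z - lam (k + 1)) 0 ^ σ := by
  obtain ⟨N, hN⟩ := (tendsto_atTop.1 htend z).exists_forall_of_atTop
  refine summable_of_ne_finset_zero (s := Finset.range N) fun k hk => ?_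
  have hzk : z - lam (k + 1) ≤ 0 := by
    linarith [hN (k + 1) (by simp only [Finset.mem_range, not_lt] at hk; omega)]
  rw [max_eq_right hzk, zero_rpow hσ]

lemma sum_range_le_rieszMean {lam : ℕ → ℝ} (htend : Tendsto lam atTop atTop) {σ : ℝ}
    (hσ : σ ≠ 0) (z : ℝ) (n : ℕ) :
    ∑ k ∈ Finset.range n, max (z - lam (k + 1)) 0 ^ σ ≤ rieszMean lam σ z :=
  (summable_rieszMean_term htend hσ z).sum_le_tsum _
    fun _ _ => rpow_nonneg (le_max_right _ _) _

lemma natCast_mul_sq_sub_eigAvg_le_rieszMean_two {lam : ℕ → ℝ}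
    (htend : Tendsto lam atTop atTop) {j : ℕ} (hj : 1 ≤ j) {w : ℝ} (hw : eigAvg lam j ≤ w) :
    (j : ℝ) * (w - eigAvg lam j) ^ 2 ≤ rieszMean lam 2 w := by
  have hj' : (0 : ℝ) < j := by exact_mod_cast hj
  have hsum : ∑ k ∈ Finset.range j, (w - lam (k + 1)) = j * (w - eigAvg lam j) := by
    rw [Finset.sum_sub_distrib, mul_sub, natCast_mul_eigAvg, Finset.range_eq_Ico,
      Finset.sum_Ico_add' lam, ← Finset.Ico_add_one_right_eq_Icc]
    simp
  have hcs := sq_sum_le_card_mul_sum_sq_max_zero (Finset.range j) (fun k => w - lam (k + 1))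
    (by rw [hsum]; exact mul_nonneg hj'.le (sub_nonneg.2 hw))
  simp only [hsum, Finset.card_range] at hcs
  have hR := sum_range_le_rieszMean htend two_ne_zero w j
  simp only [rpow_two] at hR
  refine le_of_mul_le_mul_left ?_ hj'
  calc (j : ℝ) * (j * (w - eigAvg lam j) ^ 2) = (j * (w - eigAvg lam j)) ^ 2 := by ring
    _ ≤ j * ∑ k ∈ Finset.range j, max (w - lam (k + 1)) 0 ^ 2 := hcs
    _ ≤ j * rieszMean lam 2 w := by gcongr

lemma mul_rpow_div_le_of_monotoneOn_div_rpow {f : ℝ → ℝ} {a p w z : ℝ}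
    (hf : MonotoneOn (fun z => f z / z ^ p) (Set.Ici a)) (haw : a ≤ w) (hw : 0 < w)
    (hwz : w ≤ z) : f w / w ^ p * z ^ p ≤ f z := by
  have hz : 0 < z := hw.trans_le hwz
  have := hf (Set.mem_Ici.2 haw) (Set.mem_Ici.2 (haw.trans hwz)) hwz
  rwa [le_div_iff₀ (rpow_pos_of_pos hz p)] at this

lemma one_add_four_div_mul_sub_self {d : ℝ} (hd : 0 < d) (A : ℝ) :
    (1 + 4 / d) * A - A = (1 + 4 / d) * A / (1 + d / 4) := by
  field_simp
  ring

theorem rieszMean_one_lower_bound_avg_general (d : ℕ) (hd : 0 < d) (j : ℕ) (hj : 1 ≤ j)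
    (lam : ℕ → ℝ)
    (hmono : ∀ k : ℕ, 1 ≤ k → lam k ≤ lam (k + 1))
    (hpos : 0 < lam 1)
    (htend : Tendsto lam atTop atTop)
    (hmonoR : MonotoneOn (fun z => rieszMean lam 2 z / z ^ (2 + (d : ℝ) / 2))
      (Set.Ici (lam 1)))
    (hdiff1 : ∀ z : ℝ, lam 1 ≤ z →
      rieszMean lam 1 z ≥ (1 + (d : ℝ) / 4) * rieszMean lam 2 z / z) :
    ∀ z : ℝ, (1 + 4 / (d : ℝ)) * eigAvg lam j ≤ z →
      rieszMean lam 1 z ≥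
        (j : ℝ) * z ^ (1 + (d : ℝ) / 2) /
          ((1 + (d : ℝ) / 4) *
            ((1 + 4 / (d : ℝ)) * eigAvg lam j) ^ ((d : ℝ) / 2)) := by
  intro z hwz
  set A := eigAvg lam j
  set w := (1 + 4 / (d : ℝ)) * A
  set c := 1 + (d : ℝ) / 4
  set p := (d : ℝ) / 2
  have hd' : (0 : ℝ) < d := by exact_mod_cast hd
  have h1A : lam 1 ≤ A := lam_one_le_eigAvg hmono hj
  have hAw : A ≤ w := le_mul_of_one_le_left (hpos.trans_le h1A).le (by simp; positivity)
  have hw : 0 < w := hpos.trans_le (h1A.trans hAw)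
  have hz : 0 < z := hw.trans_le hwz
  have hR2w := natCast_mul_sq_sub_eigAvg_le_rieszMean_two htend hj hAw
  rw [one_add_four_div_mul_sub_self hd'] at hR2w
  calc rieszMean lam 1 z ≥ c * rieszMean lam 2 z / z := hdiff1 z (h1A.trans (hAw.trans hwz))
    _ ≥ c * (rieszMean lam 2 w / w ^ (2 + p) * z ^ (2 + p)) / z := by
      gcongr
      exact mul_rpow_div_le_of_monotoneOn_div_rpow hmonoR (h1A.trans hAw) hw hwz
    _ ≥ c * (j * (w / c) ^ 2 / w ^ (2 + p) * z ^ (2 + p)) / z := by gcongr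
    _ = j * z ^ (1 + p) / (c * w ^ p) := by
      rw [rpow_add hw, rpow_two, show 2 + p = 1 + p + 1 by ring, rpow_add hz, rpow_one]
      have := (rpow_pos_of_pos hw p).ne'
      field_simp

/-- Inequality (2.27) of Corollary 7: for `z ≥ (1 + 4/d) λ̄_j`,
`R_1(z) ≥ j z^(1+d/2) / ((1 + d/4) ((1 + 4/d) λ̄_j)^(d/2))`. -/
theorem rieszMean_one_lower_bound_avg (d : ℕ) (hd : 0 < d) (j : ℕ) (hj : 1 ≤ j)
    (lam : ℕ → ℝ)
    (hmono : ∀ k : ℕ, 1 ≤ k → lam k ≤ lam (k + 1))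
    (hpos : 0 < lam 1)
    (htend : Tendsto lam atTop atTop)
    (hmonoR : MonotoneOn (fun z => rieszMean lam 2 z / z ^ (2 + (d : ℝ) / 2))
      (Set.Ici (lam 1)))
    (hyang : lam j ≤ (1 + 4 / (d : ℝ)) * eigAvg lam j)
    (hdiff1 : ∀ z : ℝ, lam 1 ≤ z →
      rieszMean lam 1 z ≥ (1 + (d : ℝ) / 4) * rieszMean lam 2 z / z) :
    ∀ z : ℝ, (1 + 4 / (d : ℝ)) * eigAvg lam j ≤ z →
      rieszMean lam 1 z ≥
        (j : ℝ) * z ^ (1 + (d : ℝ) / 2) /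
          ((1 + (d : ℝ) / 4) *
            ((1 + 4 / (d : ℝ)) * eigAvg lam j) ^ ((d : ℝ) / 2)) :=
  rieszMean_one_lower_bound_avg_general d hd j hj lam hmono hpos htend hmonoR hdiff1
end

section
/- Let d be a positive integer, let j ≥ 1 be an integer, and let λ : ℕ → ℝ (indexed from 1) be nondecreasing with λ_1 > 0. Suppose that for every z ≥ (1 + 4/d)·λ̄_j one has N(z) ≥ j · ( z / ((1 + 4/d)·λ̄_j) )^{d/2}. Then for every integer k ≥ j, λ_{k+1} ≤ (1 + 4/d) · (k/j)^{2/d} · λ̄_j. -/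
/-!
With `B = (1 + 4/d) λ̄_j`, inverting the power law `N(z) ≥ j (z/B)^{d/2}` bounds `z` by
`B (N(z)/j)^{2/d}`; at `z = λ_{k+1}` monotonicity gives `N(λ_{k+1}) ≤ k`.
-/

open Real Filter

theorem countingFn_le_of_le_lam_succ {lam : ℕ → ℝ} (hlam : MonotoneOn lam (Set.Ici 1))
    {z : ℝ} {k : ℕ} (hz : z ≤ lam (k + 1)) : countingFn lam z ≤ k := by
  have hsub : {ℓ : ℕ | 1 ≤ ℓ ∧ lam ℓ < z} ⊆ Set.Icc 1 k := fun ℓ ⟨hℓ, hlt⟩ =>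
    ⟨hℓ, not_lt.mp fun hkℓ => (hlt.trans_le hz).not_ge <|
      hlam (Set.mem_Ici.mpr (by omega)) (Set.mem_Ici.mpr hℓ) hkℓ⟩
  have := Nat.card_mono (Set.finite_Icc 1 k) hsub
  rw [Nat.card_coe_set_eq, Nat.card_coe_set_eq, Set.ncard_Icc_nat] at this
  unfold countingFn
  exact_mod_cast this.trans (by omega)

theorem eigAvg_pos {lam : ℕ → ℝ} {j : ℕ} (hj : 1 ≤ j) (hlam : ∀ ℓ, 1 ≤ ℓ → ℓ ≤ j → 0 < lam ℓ) :
    0 < eigAvg lam j :=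
  div_pos (Finset.sum_pos (fun ℓ hℓ => hlam ℓ (Finset.mem_Icc.mp hℓ).1 (Finset.mem_Icc.mp hℓ).2)
    ⟨1, Finset.mem_Icc.mpr ⟨le_rfl, hj⟩⟩) (by exact_mod_cast hj)

theorem le_mul_rpow_inv_of_mul_rpow_le {B a x j k : ℝ} (hB : 0 < B) (ha : 0 < a) (hj : 0 < j)
    (hjk : j ≤ k) (hx : B ≤ x → j * (x / B) ^ a ≤ k) : x ≤ B * (k / j) ^ a⁻¹ := by
  have hkj : 1 ≤ k / j := (one_le_div hj).mpr hjk
  rcases lt_or_ge x B with hxB | hxB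
  · exact hxB.le.trans (le_mul_of_one_le_right hB.le (one_le_rpow hkj (inv_nonneg.mpr ha.le)))
  · rw [← div_le_iff₀' hB,
      le_rpow_inv_iff_of_pos (div_nonneg (hB.le.trans hxB) hB.le) (by positivity) ha,
      le_div_iff₀' hj]
    exact hx hxB

/-- Inequality (2.29) of Corollary 7: from the counting-function bound (2.28),
for every `k ≥ j`, `λ_{k+1} ≤ (1 + 4/d) (k/j)^(2/d) λ̄_j`. -/
theorem eigenvalue_ratio_bound_avg (d : ℕ) (hd : 0 < d) (j : ℕ) (hj : 1 ≤ j)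
    (lam : ℕ → ℝ)
    (hmono : ∀ k : ℕ, 1 ≤ k → lam k ≤ lam (k + 1))
    (hpos : 0 < lam 1)
    (hcount : ∀ z : ℝ, (1 + 4 / (d : ℝ)) * eigAvg lam j ≤ z →
      countingFn lam z ≥
        (j : ℝ) * (z / ((1 + 4 / (d : ℝ)) * eigAvg lam j)) ^ ((d : ℝ) / 2)) :
    ∀ k : ℕ, j ≤ k →
      lam (k + 1) ≤
        (1 + 4 / (d : ℝ)) * ((k : ℝ) / (j : ℝ)) ^ (2 / (d : ℝ)) * eigAvg lam j := by
  intro k hk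
  have hlam : MonotoneOn lam (Set.Ici 1) := monotoneOn_nat_Ici_of_le_succ hmono
  have havg : 0 < eigAvg lam j :=
    eigAvg_pos hj fun ℓ hℓ _ => hpos.trans_le (hlam (Set.mem_Ici.mpr le_rfl) hℓ hℓ)
  rw [mul_right_comm, show (2 : ℝ) / d = ((d : ℝ) / 2)⁻¹ from (inv_div _ _).symm]
  exact le_mul_rpow_inv_of_mul_rpow_le (by positivity) (by positivity) (by exact_mod_cast hj)
    (by exact_mod_cast hk) fun hB =>
      (hcount _ hB).trans (countingFn_le_of_le_lam_succ hlam le_rfl)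
end

section
/- Let λ : ℕ → ℝ (indexed from 1) be nondecreasing with λ_k → ∞, let σ > 1 be real, and let z be real. Then R_{σ−1}(z)^σ ≤ N(z) · R_σ(z)^{σ−1}. -/
open Real Filter

/-- Hölder's inequality with exponents `σ / (σ - 1)` and `σ`, applied to `1 · a ^ (σ - 1)`. -/
theorem Finset.sum_rpow_sub_one_rpow_le_card_mul {ι : Type*} (s : Finset ι) {a : ι → ℝ}
    (ha : ∀ i ∈ s, 0 ≤ a i) {σ : ℝ} (hσ : 1 < σ) :
    (∑ i ∈ s, a i ^ (σ - 1)) ^ σ ≤ s.card * (∑ i ∈ s, a i ^ σ) ^ (σ - 1) := by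
  have hσ₁ : 0 < σ - 1 := by linarith
  set p := σ / (σ - 1)
  have hp : 1 ≤ p := (one_le_div hσ₁).2 (by linarith)
  have hpσ : p * (σ - 1) = σ := div_mul_cancel₀ σ hσ₁.ne'
  have hpow : ∀ i ∈ s, (a i ^ (σ - 1)) ^ p = a i ^ σ := fun i hi => by
    rw [← rpow_mul (ha i hi), mul_comm, hpσ]
  have holder := rpow_sum_le_const_mul_sum_rpow_of_nonneg s hp
    (fun i hi => rpow_nonneg (ha i hi) (σ - 1))
  rw [Finset.sum_congr rfl hpow] at holder
  have hsum_nonneg : 0 ≤ ∑ i ∈ s, a i ^ (σ - 1) :=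
    Finset.sum_nonneg fun i hi => rpow_nonneg (ha i hi) _
  calc (∑ i ∈ s, a i ^ (σ - 1)) ^ σ = ((∑ i ∈ s, a i ^ (σ - 1)) ^ p) ^ (σ - 1) := by
        rw [← rpow_mul hsum_nonneg, hpσ]
    _ ≤ ((s.card : ℝ) ^ (p - 1) * ∑ i ∈ s, a i ^ σ) ^ (σ - 1) :=
        rpow_le_rpow (rpow_nonneg hsum_nonneg p) holder hσ₁.le
    _ = s.card * (∑ i ∈ s, a i ^ σ) ^ (σ - 1) := by
        have hexp : (p - 1) * (σ - 1) = 1 := by rw [sub_mul, hpσ]; ring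
        rw [mul_rpow (rpow_nonneg s.card.cast_nonneg _)
            (Finset.sum_nonneg fun i hi => rpow_nonneg (ha i hi) _),
          ← rpow_mul s.card.cast_nonneg, hexp, rpow_one]

theorem Filter.Tendsto.finite_setOf_lt {f : ℕ → ℝ} (hf : Tendsto f atTop atTop) (z : ℝ) :
    {k | f k < z}.Finite := by
  have := hf.eventually_ge_atTop z
  rw [← Nat.cofinite_eq_atTop, eventually_cofinite] at this
  simpa only [not_le] using this

section RieszMean

variable {lam : ℕ → ℝ} {z : ℝ}

theorem rieszMean_eq_sum {σ : ℝ} (hσ : σ ≠ 0) {s : Finset ℕ}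
    (hs : ∀ k, lam (k + 1) < z → k ∈ s) :
    rieszMean lam σ z = ∑ k ∈ s, max (z - lam (k + 1)) 0 ^ σ :=
  tsum_eq_sum fun k hk => by
    rw [max_eq_right (by linarith [not_lt.1 (mt (hs k) hk)]), zero_rpow hσ]

theorem countingFn_eq_ncard : countingFn lam z = {k | lam (k + 1) < z}.ncard := by
  have himage : (· + 1) '' {k | lam (k + 1) < z} = {k | 1 ≤ k ∧ lam k < z} := by
    ext (_ | k) <;> simp
  rw [countingFn, ← Set.ncard_image_of_injective _ (add_left_injective 1), himage]
  rfl

end RieszMean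

theorem rieszMean_holder_counting_general (lam : ℕ → ℝ)
    (htend : Tendsto lam atTop atTop)
    (σ : ℝ) (hσ : 1 < σ) (z : ℝ) :
    rieszMean lam (σ - 1) z ^ σ ≤ countingFn lam z * rieszMean lam σ z ^ (σ - 1) := by
  have hfin : {k | lam (k + 1) < z}.Finite :=
    (htend.comp (tendsto_add_atTop_nat 1)).finite_setOf_lt z
  have hsupp : ∀ k, lam (k + 1) < z → k ∈ hfin.toFinset := fun k hk => hfin.mem_toFinset.2 hk
  rw [rieszMean_eq_sum (by linarith) hsupp, rieszMean_eq_sum (by linarith) hsupp,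
    countingFn_eq_ncard, Set.ncard_eq_toFinset_card _ hfin]
  exact hfin.toFinset.sum_rpow_sub_one_rpow_le_card_mul (fun k _ => le_max_right _ _) hσ

/-- Inequality (2.23): `R_{σ-1}(z)^σ ≤ N(z) · R_σ(z)^(σ-1)`, a consequence of
Hölder's inequality. -/
theorem rieszMean_holder_counting (lam : ℕ → ℝ)
    (hmono : ∀ k : ℕ, 1 ≤ k → lam k ≤ lam (k + 1))
    (htend : Tendsto lam atTop atTop)
    (σ : ℝ) (hσ : 1 < σ) (z : ℝ) :
    rieszMean lam (σ - 1) z ^ σ ≤ countingFn lam z * rieszMean lam σ z ^ (σ - 1) :=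
  rieszMean_holder_counting_general lam htend σ hσ z
end

section
/- Let λ : ℕ → ℝ (indexed from 1) be nondecreasing with λ_k → ∞, let w > 0 be real, and set k := ⌊w⌋. Then the Legendre transform of R_1 at w satisfies: sup over z ∈ ℝ of ( w·z − R_1(z) ) = (w − k)·λ_{k+1} + Σ_{ℓ=1}^{k} λ_ℓ, and the supremum is attained at z = λ_{k+1}. -/
open Real Filter

/-!
`R_1` is convex and piecewise linear, with slope `j` between `λ_j` and `λ_{j+1}`, so
`z ↦ w z - R_1(z)` increases while `j < w` and decreases afterwards, peaking at `λ_{k+1}`.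
Concretely, dropping the negative parts gives `R_1(z) ≥ m z - Σ_{ℓ ≤ m} λ_ℓ` for every `m`:
taking `m = k` bounds `w z - R_1(z)` for `z ≤ λ_{k+1}`, taking `m = k + 1` bounds it for
`z ≥ λ_{k+1}`, and at `z = λ_{k+1}` monotonicity makes the bound with `m = k` an equality.
-/

open Finset

theorem sum_Icc_one_eq_sum_range_succ {M : Type*} [AddCommMonoid M] (f : ℕ → M) (m : ℕ) :
    ∑ ℓ ∈ Icc 1 m, f ℓ = ∑ j ∈ range m, f (j + 1) := by
  rw [range_eq_Ico, sum_Ico_add' f 0 m 1]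
  rfl

theorem rieszMean_one_eq_tsum (lam : ℕ → ℝ) (z : ℝ) :
    rieszMean lam 1 z = ∑' j : ℕ, max (z - lam (j + 1)) 0 := by
  simp only [rieszMean, Real.rpow_one]

theorem summable_max_sub_zero (lam : ℕ → ℝ) (htend : Tendsto lam atTop atTop) (z : ℝ) :
    Summable fun j : ℕ => max (z - lam (j + 1)) 0 := by
  obtain ⟨N, hN⟩ := (htend.eventually_ge_atTop z).exists_forall_of_atTop
  refine summable_of_ne_finset_zero (s := range N) fun j hj => ?_
  rw [mem_range, not_lt] at hj
  exact max_eq_right (sub_nonpos.mpr (hN _ (by omega)))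

theorem mul_sub_sum_le_rieszMean_one (lam : ℕ → ℝ) (htend : Tendsto lam atTop atTop)
    (z : ℝ) (m : ℕ) : m * z - ∑ ℓ ∈ Icc 1 m, lam ℓ ≤ rieszMean lam 1 z := by
  rw [rieszMean_one_eq_tsum, sum_Icc_one_eq_sum_range_succ]
  calc (m : ℝ) * z - ∑ j ∈ range m, lam (j + 1)
      = ∑ j ∈ range m, (z - lam (j + 1)) := by simp [sum_sub_distrib]
    _ ≤ ∑ j ∈ range m, max (z - lam (j + 1)) 0 := sum_le_sum fun j _ => le_max_left _ _
    _ ≤ ∑' j, max (z - lam (j + 1)) 0 :=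
      (summable_max_sub_zero lam htend z).sum_le_tsum _ fun j _ => le_max_right _ _

theorem rieszMean_one_apply_lam (lam : ℕ → ℝ) (hmono : Monotone fun j => lam (j + 1)) (m : ℕ) :
    rieszMean lam 1 (lam (m + 1)) = m * lam (m + 1) - ∑ ℓ ∈ Icc 1 m, lam ℓ := by
  rw [rieszMean_one_eq_tsum, sum_Icc_one_eq_sum_range_succ, tsum_eq_sum (s := range m)]
  · calc ∑ j ∈ range m, max (lam (m + 1) - lam (j + 1)) 0
        = ∑ j ∈ range m, (lam (m + 1) - lam (j + 1)) :=
          sum_congr rfl fun j hj => max_eq_left (sub_nonneg.mpr (hmono (mem_range.mp hj).le))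
      _ = m * lam (m + 1) - ∑ j ∈ range m, lam (j + 1) := by simp [sum_sub_distrib]
  · intro j hj
    exact max_eq_right (sub_nonpos.mpr (hmono (not_lt.mp (mem_range.not.mp hj))))

theorem mul_lam_sub_rieszMean_one (lam : ℕ → ℝ) (hmono : Monotone fun j => lam (j + 1))
    (w : ℝ) (m : ℕ) :
    w * lam (m + 1) - rieszMean lam 1 (lam (m + 1)) =
      (w - m) * lam (m + 1) + ∑ ℓ ∈ Icc 1 m, lam ℓ := by
  rw [rieszMean_one_apply_lam lam hmono]
  ring

theorem mul_sub_rieszMean_one_le (lam : ℕ → ℝ) (htend : Tendsto lam atTop atTop)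
    (w : ℝ) (m : ℕ) (hmw : m ≤ w) (hwm : w ≤ m + 1) (z : ℝ) :
    w * z - rieszMean lam 1 z ≤ (w - m) * lam (m + 1) + ∑ ℓ ∈ Icc 1 m, lam ℓ := by
  rcases le_or_gt z (lam (m + 1)) with hz | hz
  · have hR := mul_sub_sum_le_rieszMean_one lam htend z m
    have : (w - m) * z ≤ (w - m) * lam (m + 1) := mul_le_mul_of_nonneg_left hz (by linarith)
    linarith
  · have hR := mul_sub_sum_le_rieszMean_one lam htend z (m + 1)
    rw [sum_Icc_succ_top (by omega), Nat.cast_succ] at hR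
    have : (w - (m + 1)) * z ≤ (w - (m + 1)) * lam (m + 1) :=
      mul_le_mul_of_nonpos_left hz.le (by linarith)
    linarith

theorem isGreatest_mul_sub_rieszMean_one (lam : ℕ → ℝ) (hmono : Monotone fun j => lam (j + 1))
    (htend : Tendsto lam atTop atTop) (w : ℝ) (m : ℕ) (hmw : m ≤ w) (hwm : w ≤ m + 1) :
    IsGreatest (Set.range fun z => w * z - rieszMean lam 1 z)
      ((w - m) * lam (m + 1) + ∑ ℓ ∈ Icc 1 m, lam ℓ) := by
  refine ⟨⟨lam (m + 1), mul_lam_sub_rieszMean_one lam hmono w m⟩, ?_⟩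
  rintro _ ⟨z, rfl⟩
  exact mul_sub_rieszMean_one_le lam htend w m hmw hwm z

/-- The Legendre transform of `R_1`: for `w > 0` and `k := ⌊w⌋`,
`sup_z (w z - R_1(z)) = (w - k) λ_{k+1} + Σ_{ℓ=1}^k λ_ℓ`, and the supremum is
attained at `z = λ_{k+1}`. -/
theorem legendre_transform_rieszMean_one (lam : ℕ → ℝ)
    (hmono : ∀ k : ℕ, 1 ≤ k → lam k ≤ lam (k + 1))
    (htend : Tendsto lam atTop atTop)
    (w : ℝ) (hw : 0 < w) (k : ℕ) (hk : k = ⌊w⌋₊) :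
    sSup (Set.range fun z : ℝ => w * z - rieszMean lam 1 z) =
        (w - (k : ℝ)) * lam (k + 1) + ∑ ℓ ∈ Finset.Icc 1 k, lam ℓ ∧
      w * lam (k + 1) - rieszMean lam 1 (lam (k + 1)) =
        (w - (k : ℝ)) * lam (k + 1) + ∑ ℓ ∈ Finset.Icc 1 k, lam ℓ := by
  have hmono' : Monotone fun j => lam (j + 1) :=
    monotone_nat_of_le_succ fun j => hmono (j + 1) j.succ_pos
  have hkw : (k : ℝ) ≤ w := hk ▸ Nat.floor_le hw.le
  have hwk : w ≤ k + 1 := hk ▸ (Nat.lt_floor_add_one w).le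
  exact ⟨(isGreatest_mul_sub_rieszMean_one lam hmono' htend w k hkw hwk).csSup_eq,
    mul_lam_sub_rieszMean_one lam hmono' w k⟩
end

section
/- Let d be a positive integer and let λ : ℕ → ℝ (indexed from 1) be nondecreasing with λ_1 > 0. Suppose that for every integer j ≥ 1 one has λ_{j+1} ≤ (1 + 4/d) · j^{2/d} · λ_1. Then for every integer k ≥ 1, λ̄_k ≤ ((d + 4)/(d + 2)) · k^{2/d} · λ_1. -/
open Real Filter

/-!
Bounding each `λ_{j+1}` by the Cheng–Yang bound and comparing `Σ_{j=1}^{k-1} j^s` with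
`∫_1^k x^s dx = (k^{s+1} - 1)/(s+1)` gives
`Σ_{ℓ ≤ k} λ_ℓ ≤ λ_1 + c λ_1 (k^{s+1} - 1)/(s+1)`. Since `c ≥ s + 1`, the leftover `λ_1 (1 - c/(s+1))`
is nonpositive, which leaves `c/(s+1) · k^{s+1} λ_1`; with `s = 2/d`, `c = 1 + 4/d` the constant is
`(d+4)/(d+2)`.
-/

theorem sum_Ico_one_rpow_le {s : ℝ} (hs : 0 ≤ s) {k : ℕ} (hk : 1 ≤ k) :
    ∑ j ∈ Finset.Ico 1 k, (j : ℝ) ^ s ≤ ((k : ℝ) ^ (s + 1) - 1) / (s + 1) := by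
  have hmono : MonotoneOn (fun x : ℝ => x ^ s) (Set.Icc (1 : ℕ) k) := fun x hx _ _ hxy =>
    rpow_le_rpow (by simp only [Nat.cast_one, Set.mem_Icc] at hx; linarith [hx.1]) hxy hs
  calc ∑ j ∈ Finset.Ico 1 k, (j : ℝ) ^ s ≤ ∫ x in (1 : ℕ)..k, x ^ s :=
        hmono.sum_le_integral_Ico hk
    _ = ((k : ℝ) ^ (s + 1) - 1) / (s + 1) := by
        rw [integral_rpow (Or.inl (by linarith))]
        simp

theorem sum_Icc_one_eq_add_sum_Ico (f : ℕ → ℝ) {k : ℕ} (hk : 1 ≤ k) :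
    ∑ ℓ ∈ Finset.Icc 1 k, f ℓ = f 1 + ∑ j ∈ Finset.Ico 1 k, f (j + 1) := by
  rw [← Finset.Ico_add_one_right_eq_Icc, Finset.sum_eq_sum_Ico_succ_bot (by omega),
    Finset.sum_Ico_add']

theorem eigAvg_le_of_le_mul_rpow {lam : ℕ → ℝ} {s c : ℝ} (hs : 0 ≤ s) (hc : s + 1 ≤ c)
    (hlam : 0 ≤ lam 1) (hbound : ∀ j : ℕ, 1 ≤ j → lam (j + 1) ≤ c * (j : ℝ) ^ s * lam 1)
    (k : ℕ) : eigAvg lam k ≤ c / (s + 1) * (k : ℝ) ^ s * lam 1 := by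
  have hs1 : 0 < s + 1 := by linarith
  have hc0 : 0 ≤ c := by linarith
  rcases Nat.eq_zero_or_pos k with rfl | hk
  · simp only [eigAvg, Nat.cast_zero, div_zero]
    positivity
  have hk0 : (0 : ℝ) < k := by exact_mod_cast hk
  have hratio : 1 ≤ c / (s + 1) := (one_le_div hs1).2 hc
  rw [eigAvg, div_le_iff₀ hk0]
  calc ∑ ℓ ∈ Finset.Icc 1 k, lam ℓ = lam 1 + ∑ j ∈ Finset.Ico 1 k, lam (j + 1) :=
        sum_Icc_one_eq_add_sum_Ico lam hk
    _ ≤ lam 1 + ∑ j ∈ Finset.Ico 1 k, c * lam 1 * (j : ℝ) ^ s := by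
        gcongr with j hj
        linarith [hbound j (Finset.mem_Ico.1 hj).1]
    _ ≤ lam 1 + c * lam 1 * (((k : ℝ) ^ (s + 1) - 1) / (s + 1)) := by
        rw [← Finset.mul_sum]
        gcongr
        exact sum_Ico_one_rpow_le hs hk
    _ = c / (s + 1) * (k : ℝ) ^ (s + 1) * lam 1 - (c / (s + 1) - 1) * lam 1 := by ring
    _ ≤ c / (s + 1) * (k : ℝ) ^ (s + 1) * lam 1 := by nlinarith
    _ = c / (s + 1) * (k : ℝ) ^ s * lam 1 * k := by rw [rpow_add_one hk0.ne']; ring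

theorem averaged_chengYang_bound_general (d : ℕ) (hd : 0 < d) (lam : ℕ → ℝ)
    (hpos : 0 < lam 1)
    (hCY : ∀ j : ℕ, 1 ≤ j →
      lam (j + 1) ≤ (1 + 4 / (d : ℝ)) * (j : ℝ) ^ (2 / (d : ℝ)) * lam 1) :
    ∀ k : ℕ, 1 ≤ k →
      eigAvg lam k ≤
        (((d : ℝ) + 4) / ((d : ℝ) + 2)) * (k : ℝ) ^ (2 / (d : ℝ)) * lam 1 := by
  intro k _
  have hd' : (0 : ℝ) < d := by exact_mod_cast hd
  have hconst : (1 + 4 / (d : ℝ)) / (2 / d + 1) = (d + 4) / (d + 2) := by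
    field_simp
    ring
  have hc : 2 / (d : ℝ) + 1 ≤ 1 + 4 / d := by
    rw [show (4 : ℝ) / d = 2 / d + 2 / d by ring]
    linarith [div_pos two_pos hd']
  rw [← hconst]
  exact eigAvg_le_of_le_mul_rpow (by positivity) hc hpos.le hCY k

/-- Inequality (4.2): the averaged Cheng–Yang bound. If `λ_{j+1} ≤ (1 + 4/d) j^(2/d) λ_1`
for all `j ≥ 1`, then `λ̄_k ≤ ((d+4)/(d+2)) k^(2/d) λ_1` for all `k ≥ 1`. -/
theorem averaged_chengYang_bound (d : ℕ) (hd : 0 < d) (lam : ℕ → ℝ)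
    (hmono : ∀ k : ℕ, 1 ≤ k → lam k ≤ lam (k + 1))
    (hpos : 0 < lam 1)
    (hCY : ∀ j : ℕ, 1 ≤ j →
      lam (j + 1) ≤ (1 + 4 / (d : ℝ)) * (j : ℝ) ^ (2 / (d : ℝ)) * lam 1) :
    ∀ k : ℕ, 1 ≤ k →
      eigAvg lam k ≤
        (((d : ℝ) + 4) / ((d : ℝ) + 2)) * (k : ℝ) ^ (2 / (d : ℝ)) * lam 1 :=
  averaged_chengYang_bound_general d hd lam hpos hCY
end

section
/- For every positive integer d, one has 1 < 2·( (1 + d/4)/(1 + d/2) )^{1 + 2/d} < (d + 4)/(d + 2). -/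
/-!
Write `b = (1 + d/4)/(1 + d/2) = (1 + 2/n)/2` with `n = d + 2`, so that `1/2 < b < 1`.
The upper bound is `b ^ (1 + 2/d) < b`, as the exponent exceeds `1`.
The lower bound `1/2 < b ^ (n/d)` is, after raising to the power `d`, the inequality
`4 < (1 + 2/n) ^ n`, which the second-order Bernoulli inequality gives as soon as `n > 2`.
-/

open Real

theorem one_add_mul_add_choose_two_mul_sq_le_pow {x : ℝ} (hx : 0 ≤ x) (n : ℕ) :
    1 + n * x + n.choose 2 * x ^ 2 ≤ (1 + x) ^ n := by
  induction n with
  | zero => simp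
  | succ n ih =>
    calc 1 + (n + 1 : ℕ) * x + (n + 1).choose 2 * x ^ 2
        = 1 + (n + 1) * x + (n.choose 2 + n) * x ^ 2 := by
          rw [Nat.choose_succ_succ', Nat.choose_one_right]; push_cast; ring
      _ ≤ (1 + x) * (1 + n * x + n.choose 2 * x ^ 2) := by
          nlinarith [mul_nonneg (Nat.cast_nonneg (n.choose 2) : (0 : ℝ) ≤ _) (pow_nonneg hx 3)]
      _ ≤ (1 + x) * (1 + x) ^ n := by gcongr
      _ = (1 + x) ^ (n + 1) := by ring

theorem four_lt_one_add_two_div_pow {n : ℕ} (hn : 2 < n) : 4 < (1 + 2 / (n : ℝ)) ^ n := by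
  have hn' : (2 : ℝ) < n := by exact_mod_cast hn
  calc (4 : ℝ) < 1 + n * (2 / n) + n.choose 2 * (2 / n) ^ 2 := by
        rw [Nat.cast_choose_two]
        field_simp
        nlinarith
    _ ≤ (1 + 2 / (n : ℝ)) ^ n := one_add_mul_add_choose_two_mul_sq_le_pow (by positivity) n

theorem lt_rpow_div_of_pow_lt_pow {a b : ℝ} {m d : ℕ} (ha : 0 ≤ a) (hb : 0 ≤ b) (hd : d ≠ 0)
    (h : a ^ d < b ^ m) : a < b ^ ((m : ℝ) / d) := by
  calc a = (a ^ d) ^ ((d : ℝ)⁻¹) := (pow_rpow_inv_natCast ha hd).symm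
    _ < (b ^ m) ^ ((d : ℝ)⁻¹) := by gcongr
    _ = b ^ ((m : ℝ) / d) := by rw [← rpow_natCast, ← rpow_mul hb, div_eq_mul_inv]

/-- Comparison of coefficients from Section 4: for every positive integer `d`,
`1 < 2 ((1 + d/4)/(1 + d/2))^(1 + 2/d) < (d + 4)/(d + 2)` (real powers). -/
theorem coefficient_comparison (d : ℕ) (hd : 0 < d) :
    1 < 2 * ((1 + (d : ℝ) / 4) / (1 + (d : ℝ) / 2)) ^ (1 + 2 / (d : ℝ)) ∧
      2 * ((1 + (d : ℝ) / 4) / (1 + (d : ℝ) / 2)) ^ (1 + 2 / (d : ℝ)) <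
        ((d : ℝ) + 4) / ((d : ℝ) + 2) := by
  have hd' : (0 : ℝ) < d := by exact_mod_cast hd
  set b := (1 + 2 / ((d + 2 : ℕ) : ℝ)) / 2 with hb_def
  have hb : (1 + (d : ℝ) / 4) / (1 + (d : ℝ) / 2) = b := by
    rw [hb_def]; push_cast; field_simp; ring
  have hb_pos : 0 < b := by positivity
  have hb_lt_one : b < 1 := by
    have : 2 / ((d + 2 : ℕ) : ℝ) < 1 := (div_lt_one (by positivity)).2 (by push_cast; linarith)
    rw [hb_def, div_lt_one two_pos]
    linarith
  have hexp : (1 : ℝ) + 2 / d = ((d + 2 : ℕ) : ℝ) / d := by push_cast; field_simp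
  have hpow : (1 / 2 : ℝ) ^ d < b ^ (d + 2) :=
    calc (1 / 2 : ℝ) ^ d = 4 / 2 ^ (d + 2) := by rw [pow_add, one_div_pow]; field_simp; norm_num
      _ < (1 + 2 / ((d + 2 : ℕ) : ℝ)) ^ (d + 2) / 2 ^ (d + 2) := by
        gcongr; exact four_lt_one_add_two_div_pow (by omega)
      _ = b ^ (d + 2) := (div_pow _ _ _).symm
  have hlower : 1 / 2 < b ^ (1 + 2 / (d : ℝ)) := by
    rw [hexp]; exact lt_rpow_div_of_pow_lt_pow (by norm_num) hb_pos.le hd.ne' hpow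
  have hupper : b ^ (1 + 2 / (d : ℝ)) < b :=
    rpow_lt_self_of_lt_one hb_pos hb_lt_one (lt_add_of_pos_right 1 (by positivity))
  have h2b : 2 * b = ((d : ℝ) + 4) / ((d : ℝ) + 2) := by
    rw [hb_def]; push_cast; field_simp; ring
  rw [hb, ← h2b]
  constructor <;> linarith
end
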